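/- arXiv:2103.11680 — 3 statements merged into one kernel-verified Lean document; each statement's English description precedes it below -/
import Mathlib

section
/- For any integer k ≥ 3 and any σ ∈ {−1,+1}^k, the quadratic form σᵀ M σ = (2/k)·∑_{a,b} σ_a σ_b cos(π(a−b)/k) satisfies σᵀ M σ ≤ 2/(k·sin²(π/(2k))). -/
/-!
With `x_a = π a / k`, the form is `(2/k) |∑ σ_a e^{i x_a}|²`, and the modulus of that sum is its
projection `∑ σ_a cos (x_a - θ)` onto a suitable direction `θ`. As
`2 sin h · cos x = sin (x + h) - sin (x - h)` with `h = π / (2k)`, this projection is `(2 sin h)⁻¹`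
times a signed sum of increments of `sin` over `k` adjacent cells of width `2h`. Those cells cover
an interval of length `π`, so the signed sum is at most `∫ |cos|` over a period, which is `2`.
-/

open Real

lemma integral_abs_cos_add_pi (t : ℝ) : ∫ x in t..t + π, |cos x| = 2 := by
  have hperiodic : Function.Periodic (fun x => |cos x|) π := fun x => by
    simp only [cos_add_pi, abs_neg]
  rw [hperiodic.intervalIntegral_add_eq t (-(π / 2)), show -(π / 2) + π = π / 2 by ring]
  have hcos : Set.EqOn (fun x => |cos x|) cos (Set.uIcc (-(π / 2)) (π / 2)) := fun x hx => by
    rw [Set.uIcc_of_le (by linarith [pi_pos])] at hx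
    exact abs_of_nonneg (cos_nonneg_of_mem_Icc hx)
  rw [intervalIntegral.integral_congr hcos, integral_cos, sin_neg, sin_pi_div_two]
  norm_num

lemma mul_sin_sub_sin_le_integral_abs_cos {c a b : ℝ} (hc : |c| ≤ 1) (hab : a ≤ b) :
    c * (sin b - sin a) ≤ ∫ x in a..b, |cos x| :=
  calc c * (sin b - sin a) ≤ |c| * |sin b - sin a| := by rw [← abs_mul]; exact le_abs_self _
    _ ≤ |∫ x in a..b, cos x| := by
        rw [integral_cos]; exact mul_le_of_le_one_left (abs_nonneg _) hc
    _ ≤ ∫ x in a..b, |cos x| := intervalIntegral.abs_integral_le_integral_abs hab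

lemma sum_mul_sin_sub_sin_le_integral_abs_cos {n : ℕ} (c : Fin n → ℝ) (hc : ∀ i, |c i| ≤ 1)
    {t : ℕ → ℝ} (ht : Monotone t) :
    ∑ i : Fin n, c i * (sin (t (i + 1)) - sin (t i)) ≤ ∫ x in t 0..t n, |cos x| :=
  calc ∑ i : Fin n, c i * (sin (t (i + 1)) - sin (t i))
      ≤ ∑ i : Fin n, ∫ x in t i..t (i + 1), |cos x| :=
        Finset.sum_le_sum fun i _ =>
          mul_sin_sub_sin_le_integral_abs_cos (hc i) (ht (Nat.le_succ i))
    _ = ∫ x in t 0..t n, |cos x| := by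
        rw [Fin.sum_univ_eq_sum_range (fun i => ∫ x in t i..t (i + 1), |cos x|)]
        exact intervalIntegral.sum_integral_adjacent_intervals
          fun i _ => continuous_cos.abs.intervalIntegrable _ _

lemma sum_mul_cos_le_inv_sin {k : ℕ} (hk : 0 < k) (σ : Fin k → ℝ) (hσ : ∀ a, |σ a| ≤ 1)
    (θ : ℝ) : ∑ a : Fin k, σ a * cos (π * a / k - θ) ≤ (sin (π / (2 * k)))⁻¹ := by
  set h := π / (2 * k) with h_def
  have hk' : (0 : ℝ) < k := Nat.cast_pos.mpr hk
  have hsin : 0 < sin h := by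
    apply sin_pos_of_pos_of_lt_pi (by positivity)
    rw [h_def, div_lt_iff₀ (by positivity)]
    nlinarith [pi_pos, (Nat.one_le_cast (α := ℝ)).mpr hk]
  set t : ℕ → ℝ := fun i => π * i / k - θ - h
  have ht : Monotone t := fun i j hij => by
    simp only [t]; gcongr
  have hcos : ∀ a : ℕ, sin (t (a + 1)) - sin (t a) = 2 * sin h * cos (π * a / k - θ) := fun a => by
    rw [sin_sub_sin]
    congr 3 <;> simp only [t, h_def] <;> push_cast <;> field_simp <;> ring
  have htotal : ∫ x in t 0..t k, |cos x| = 2 := by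
    rw [show t k = t 0 + π by simp only [t]; field_simp; ring]
    exact integral_abs_cos_add_pi _
  have hsum := sum_mul_sin_sub_sin_le_integral_abs_cos σ hσ ht
  simp only [hcos, htotal, mul_left_comm (σ _), ← Finset.mul_sum] at hsum
  rw [← one_div, le_div_iff₀ hsin]
  linarith

lemma sum_sum_mul_cos_sub {ι : Type*} [Fintype ι] (w x : ι → ℝ) :
    ∑ a, ∑ b, w a * w b * cos (x a - x b)
      = (∑ a, w a * cos (x a)) ^ 2 + (∑ a, w a * sin (x a)) ^ 2 := by
  simp only [sq, Finset.sum_mul_sum, ← Finset.sum_add_distrib, cos_sub]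
  exact Finset.sum_congr rfl fun a _ => Finset.sum_congr rfl fun b _ => by ring

lemma sq_add_sq_le_sq_of_forall_mul_cos_add_mul_sin_le {C S B : ℝ}
    (h : ∀ θ, C * cos θ + S * sin θ ≤ B) : C ^ 2 + S ^ 2 ≤ B ^ 2 := by
  set z : ℂ := ⟨C, S⟩
  have hre : ‖z‖ * cos z.arg = C := Complex.norm_mul_cos_arg z
  have him : ‖z‖ * sin z.arg = S := Complex.norm_mul_sin_arg z
  have hnorm : ‖z‖ ≤ B := by
    calc ‖z‖ = C * cos z.arg + S * sin z.arg := by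
          rw [← hre, ← him]; linear_combination -‖z‖ * (sin_sq_add_cos_sq z.arg)
      _ ≤ B := h z.arg
  calc C ^ 2 + S ^ 2 = ‖z‖ ^ 2 := by
        rw [← hre, ← him]; linear_combination ‖z‖ ^ 2 * (sin_sq_add_cos_sq z.arg)
    _ ≤ B ^ 2 := pow_le_pow_left₀ (norm_nonneg z) hnorm 2

lemma sum_sum_mul_cos_sub_le_sq {ι : Type*} [Fintype ι] (w x : ι → ℝ) {B : ℝ}
    (h : ∀ θ, ∑ a, w a * cos (x a - θ) ≤ B) :
    ∑ a, ∑ b, w a * w b * cos (x a - x b) ≤ B ^ 2 := by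
  rw [sum_sum_mul_cos_sub]
  refine sq_add_sq_le_sq_of_forall_mul_cos_add_mul_sin_le fun θ => ?_
  calc (∑ a, w a * cos (x a)) * cos θ + (∑ a, w a * sin (x a)) * sin θ
      = ∑ a, w a * cos (x a - θ) := by
        simp only [Finset.sum_mul, ← Finset.sum_add_distrib, cos_sub]
        exact Finset.sum_congr rfl fun a _ => by ring
    _ ≤ B := h θ

/-- For `k ≥ 3` and any sign vector `σ ∈ {±1}^k`, the quadratic form
`σᵀ M σ = (2/k) ∑_{a,b} σ_a σ_b cos(π(a-b)/k)` is at most `2/(k sin²(π/(2k)))`. -/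
theorem sign_vector_quadratic_form_bound (k : ℕ) (hk : 3 ≤ k)
    (σ : Fin k → ℝ) (hσ : ∀ a, σ a = 1 ∨ σ a = -1) :
    (2 / (k : ℝ)) * ∑ a : Fin k, ∑ b : Fin k,
        σ a * σ b * Real.cos (π * ((a : ℝ) - (b : ℝ)) / k)
      ≤ 2 / ((k : ℝ) * Real.sin (π / (2 * k)) ^ 2) := by
  have hσ_abs : ∀ a, |σ a| ≤ 1 := fun a => by rcases hσ a with h | h <;> simp [h]
  have hform := sum_sum_mul_cos_sub_le_sq σ (fun a : Fin k => π * a / k)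
    (sum_mul_cos_le_inv_sin (by omega) σ hσ_abs)
  calc (2 / (k : ℝ)) * ∑ a : Fin k, ∑ b : Fin k, σ a * σ b * cos (π * ((a : ℝ) - b) / k)
      = 2 / k * ∑ a : Fin k, ∑ b : Fin k, σ a * σ b * cos (π * a / k - π * b / k) := by
        simp only [mul_sub, sub_div]
    _ ≤ 2 / k * (sin (π / (2 * k)))⁻¹ ^ 2 := by gcongr
    _ = 2 / (k * sin (π / (2 * k)) ^ 2) := by field_simp
end

section
/- If ψ achieves ⟨ψ|B̄|ψ⟩ = −Nk, then for every party i and setting a, [Z̄^{(i)} cos(aπ/k) + X̄^{(i)} sin(aπ/k)] ψ = σ̄_a^{(i)} ψ, i.e., the measurements act on ψ as equally-spaced measurements in a plane. -/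
open Real

/-!
The shifted Bell operator is a sum of squares,
`B̄ + Nk = (k/2) ((∑ᵢ Z̄ᵢ)² + (∑ᵢ X̄ᵢ)²) + ∑ᵢ ∑ₐ (cos(aπ/k) Z̄ᵢ + sin(aπ/k) X̄ᵢ - σ̄ᵢₐ)²`,
an identity that only needs `σ̄ᵢₐ² = 1` and the orthogonality relations
`∑ₐ cos² = ∑ₐ sin² = k/2`, `∑ₐ cos · sin = 0` of the `k` equally spaced angles `aπ/k`.
Every term is positive, so a unit vector with `⟨ψ, B̄ ψ⟩ = -Nk` is annihilated by each
self-adjoint operator `cos(aπ/k) Z̄ᵢ + sin(aπ/k) X̄ᵢ - σ̄ᵢₐ`.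
-/

theorem sum_cos_add_sin_mul_I_sq_mul_pi_div {k : ℕ} (hk : 2 ≤ k) :
    ∑ a : Fin k, ((cos (a * π / k) : ℂ) + sin (a * π / k) * Complex.I) ^ 2 = 0 := by
  have hζ := Complex.isPrimitiveRoot_exp k (by omega)
  rw [← hζ.geom_sum_eq_zero (by omega), ← Fin.sum_univ_eq_sum_range]
  refine Finset.sum_congr rfl fun a _ => ?_
  rw [Complex.ofReal_cos, Complex.ofReal_sin, ← Complex.exp_mul_I, ← Complex.exp_nat_mul,
    ← Complex.exp_nat_mul]
  congr 1
  push_cast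
  ring

theorem sum_cos_sq_sub_sin_sq_mul_pi_div {k : ℕ} (hk : 2 ≤ k) :
    ∑ a : Fin k, (cos (a * π / k) ^ 2 - sin (a * π / k) ^ 2) = 0 := by
  have := congrArg Complex.re (sum_cos_add_sin_mul_I_sq_mul_pi_div hk)
  simp only [sq, Complex.re_sum, Complex.mul_re, Complex.add_re, Complex.add_im, Complex.mul_im,
    Complex.ofReal_re, Complex.ofReal_im, Complex.I_re, Complex.I_im] at this
  simpa [sq] using this

theorem sum_cos_mul_sin_mul_pi_div {k : ℕ} (hk : 2 ≤ k) :
    ∑ a : Fin k, cos (a * π / k) * sin (a * π / k) = 0 := by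
  have := congrArg Complex.im (sum_cos_add_sin_mul_I_sq_mul_pi_div hk)
  simp only [sq, Complex.im_sum, Complex.mul_re, Complex.add_re, Complex.add_im, Complex.mul_im,
    Complex.ofReal_re, Complex.ofReal_im, Complex.I_re, Complex.I_im] at this
  simpa [mul_comm (sin _), ← two_mul, ← Finset.mul_sum] using this

theorem sum_cos_sq_mul_pi_div {k : ℕ} (hk : 2 ≤ k) :
    ∑ a : Fin k, cos (a * π / k) ^ 2 = k / 2 := by
  have h := sum_cos_sq_sub_sin_sq_mul_pi_div hk
  have h1 : ∑ a : Fin k, (cos (a * π / k) ^ 2 + sin (a * π / k) ^ 2) = k := by simp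
  rw [Finset.sum_sub_distrib] at h
  rw [Finset.sum_add_distrib] at h1
  linarith

theorem sum_sin_sq_mul_pi_div {k : ℕ} (hk : 2 ≤ k) :
    ∑ a : Fin k, sin (a * π / k) ^ 2 = k / 2 := by
  have h := sum_cos_sq_sub_sin_sq_mul_pi_div hk
  rw [Finset.sum_sub_distrib, sum_cos_sq_mul_pi_div hk] at h
  linarith

theorem sum_smul_mul_sum_smul {𝕜 A κ : Type*} [CommSemiring 𝕜] [Semiring A] [Algebra 𝕜 A]
    [Fintype κ] (w : κ → 𝕜) (u v : κ → A) :
    (∑ a, w a • u a) * ∑ b, w b • v b = ∑ a, ∑ b, (w a * w b) • (u a * v b) := by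
  simp_rw [Finset.sum_mul_sum, smul_mul_smul_comm]

theorem sum_sum_ite_ne {A ι : Type*} [AddCommGroup A] [Fintype ι] [DecidableEq ι]
    (f : ι → ι → A) :
    ∑ i, ∑ j, (if i ≠ j then f i j else 0) = ∑ i, ∑ j, f i j - ∑ i, f i i := by
  rw [← Finset.sum_sub_distrib]
  refine Finset.sum_congr rfl fun i _ => ?_
  rw [← Finset.sum_filter, Finset.filter_ne, Finset.sum_erase_eq_sub (Finset.mem_univ i)]

def bellOperator {𝕜 A ι κ : Type*} [Semiring 𝕜] [Ring A] [Module 𝕜 A] [Fintype ι] [Fintype κ]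
    [DecidableEq ι] (w : κ → κ → 𝕜) (σ : ι → κ → A) : A :=
  ∑ a, ∑ b, w a b • ∑ i, ∑ j, if i ≠ j then σ i a * σ j b else 0

section BellSumOfSquares

variable {𝕜 A ι κ : Type*} [Field 𝕜] [Ring A] [Algebra 𝕜 A] [Fintype ι] [Fintype κ]
  {c s : κ → 𝕜} {l : 𝕜}

theorem sum_sum_inv_mul_add_mul_smul_mul (u v : κ → A) :
    ∑ a, ∑ b, (l⁻¹ * (c a * c b + s a * s b)) • (u a * v b)
      = l⁻¹ • ((∑ a, c a • u a) * (∑ a, c a • v a) + (∑ a, s a • u a) * ∑ a, s a • v a) := by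
  simp_rw [sum_smul_mul_sum_smul, smul_add, Finset.smul_sum, ← Finset.sum_add_distrib, smul_smul,
    mul_add, add_smul]

theorem bellOperator_eq (hl : l ≠ 0) [DecidableEq ι] {σ : ι → κ → A} {Z X : ι → A}
    (hZ : ∀ i, Z i = l⁻¹ • ∑ a, c a • σ i a) (hX : ∀ i, X i = l⁻¹ • ∑ a, s a • σ i a) :
    bellOperator (fun a b => l⁻¹ * (c a * c b + s a * s b)) σ
      = l • ((∑ i, Z i) * (∑ i, Z i) + (∑ i, X i) * (∑ i, X i))
        - l • ∑ i, (Z i * Z i + X i * X i) := by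
  have hcZ : ∀ i, ∑ a, c a • σ i a = l • Z i := fun i => by rw [hZ, smul_inv_smul₀ hl]
  have hsX : ∀ i, ∑ a, s a • σ i a = l • X i := fun i => by rw [hX, smul_inv_smul₀ hl]
  have key : ∀ i j, ∑ a, ∑ b, (l⁻¹ * (c a * c b + s a * s b)) • (σ i a * σ j b)
      = l • (Z i * Z j + X i * X j) := fun i j => by
    rw [sum_sum_inv_mul_add_mul_smul_mul, hcZ, hcZ, hsX, hsX]
    simp only [smul_mul_smul_comm, ← smul_add, smul_smul]
    rw [inv_mul_cancel_left₀ hl]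
  simp_rw [bellOperator, sum_sum_ite_ne, smul_sub, Finset.sum_sub_distrib, Finset.smul_sum,
    Finset.sum_comm (γ := κ) (α := ι), key, Finset.sum_mul_sum, ← Finset.sum_add_distrib,
    Finset.smul_sum]

theorem sum_smul_add_smul_sub_mul_self (hl : l ≠ 0) (hcc : ∑ a, c a ^ 2 = l)
    (hss : ∑ a, s a ^ 2 = l) (hcs : ∑ a, c a * s a = 0) {u : κ → A} (hu : ∀ a, u a * u a = 1)
    {Z X : A} (hZ : Z = l⁻¹ • ∑ a, c a • u a) (hX : X = l⁻¹ • ∑ a, s a • u a) :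
    ∑ a, (c a • Z + s a • X - u a) * (c a • Z + s a • X - u a)
      = Fintype.card κ • (1 : A) - l • (Z * Z + X * X) := by
  have hcZ : ∑ a, c a • u a = l • Z := by rw [hZ, smul_inv_smul₀ hl]
  have hsX : ∑ a, s a • u a = l • X := by rw [hX, smul_inv_smul₀ hl]
  have expand : ∀ a, (c a • Z + s a • X - u a) * (c a • Z + s a • X - u a)
      = c a ^ 2 • (Z * Z) + (c a * s a) • (Z * X + X * Z) + s a ^ 2 • (X * X)
        - (Z * (c a • u a) + (c a • u a) * Z) - (X * (s a • u a) + (s a • u a) * X)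
        + u a * u a := fun a => by
    simp only [add_mul, mul_add, sub_mul, mul_sub, smul_mul_assoc, mul_smul_comm]
    module
  simp only [expand, Finset.sum_add_distrib, Finset.sum_sub_distrib, ← Finset.sum_smul,
    ← Finset.mul_sum, ← Finset.sum_mul, hcc, hss, hcs, hcZ, hsX, hu, Finset.sum_const,
    Finset.card_univ]
  simp only [mul_smul_comm, smul_mul_assoc]
  module

theorem bellOperator_add_card_smul_one_eq [DecidableEq ι] (hl : l ≠ 0)
    (hcc : ∑ a, c a ^ 2 = l) (hss : ∑ a, s a ^ 2 = l) (hcs : ∑ a, c a * s a = 0)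
    {σ : ι → κ → A} (hσ : ∀ i a, σ i a * σ i a = 1) {Z X : ι → A}
    (hZ : ∀ i, Z i = l⁻¹ • ∑ a, c a • σ i a) (hX : ∀ i, X i = l⁻¹ • ∑ a, s a • σ i a) :
    bellOperator (fun a b => l⁻¹ * (c a * c b + s a * s b)) σ
        + (Fintype.card ι * Fintype.card κ) • (1 : A)
      = l • ((∑ i, Z i) * (∑ i, Z i) + (∑ i, X i) * (∑ i, X i))
        + ∑ i, ∑ a, (c a • Z i + s a • X i - σ i a) * (c a • Z i + s a • X i - σ i a) := by
  simp only [bellOperator_eq hl hZ hX,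
    sum_smul_add_smul_sub_mul_self hl hcc hss hcs (hσ _) (hZ _) (hX _), Finset.sum_sub_distrib,
    Finset.sum_const, Finset.card_univ, ← Finset.smul_sum, mul_smul]
  abel

end BellSumOfSquares

namespace ContinuousLinearMap

variable {𝕜 E : Type*} [RCLike 𝕜] [NormedAddCommGroup E] [InnerProductSpace 𝕜 E] [CompleteSpace E]

theorem _root_.IsSelfAdjoint.isPositive_mul_self {T : E →L[𝕜] E} (hT : IsSelfAdjoint T) :
    (T * T).IsPositive := by
  simpa [mul_def, isSelfAdjoint_iff'.mp hT] using isPositive_adjoint_comp_self T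

theorem _root_.IsSelfAdjoint.re_inner_apply_apply {T : E →L[𝕜] E} (hT : IsSelfAdjoint T)
    (x : E) : RCLike.re (inner 𝕜 x (T (T x))) = ‖T x‖ ^ 2 := by
  rw [← adjoint_inner_left, isSelfAdjoint_iff'.mp hT, inner_self_eq_norm_sq]

theorem apply_eq_zero_of_inner_add_sum_mul_self_eq_zero {ι : Type*} [Fintype ι]
    {P : E →L[𝕜] E} (hP : P.IsPositive) {T : ι → E →L[𝕜] E} (hT : ∀ j, IsSelfAdjoint (T j))
    {x : E} (h : inner 𝕜 x ((P + ∑ j, T j * T j) x) = 0) (j : ι) : T j x = 0 := by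
  have hre : RCLike.re (inner 𝕜 x (P x)) + ∑ j, ‖T j x‖ ^ 2 = 0 := by
    simpa [inner_add_right, sum_apply, inner_sum, (hT _).re_inner_apply_apply] using
      congrArg RCLike.re h
  have hsum : ∑ j, ‖T j x‖ ^ 2 = 0 := by
    linarith [hP.re_inner_nonneg_right x, Finset.sum_nonneg fun j (_ : j ∈ Finset.univ) =>
      sq_nonneg ‖T j x‖]
  simpa using (Finset.sum_eq_zero_iff_of_nonneg fun j _ => sq_nonneg ‖T j x‖).mp hsum j
    (Finset.mem_univ j)

end ContinuousLinearMap

theorem bellOperator_two_div_mul_cos_add_card_smul_one_eq {A ι : Type*} [Ring A] [Algebra ℂ A]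
    [Fintype ι] [DecidableEq ι] {k : ℕ} (hk : 2 ≤ k) {σ : ι → Fin k → A}
    (hσ : ∀ i a, σ i a * σ i a = 1) {Z X : ι → A}
    (hZ : ∀ i, Z i = ((2 / k : ℝ) : ℂ) • ∑ a : Fin k, ((cos (a * π / k) : ℝ) : ℂ) • σ i a)
    (hX : ∀ i, X i = ((2 / k : ℝ) : ℂ) • ∑ a : Fin k, ((sin (a * π / k) : ℝ) : ℂ) • σ i a) :
    bellOperator (fun a b : Fin k => ((2 / k * cos (π * (a - b) / k) : ℝ) : ℂ)) σ
        + (Fintype.card ι * k) • (1 : A)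
      = (k / 2 : ℂ) • ((∑ i, Z i) * (∑ i, Z i) + (∑ i, X i) * (∑ i, X i))
        + ∑ i, ∑ a : Fin k,
          (((cos (a * π / k) : ℝ) : ℂ) • Z i + ((sin (a * π / k) : ℝ) : ℂ) • X i - σ i a)
            * (((cos (a * π / k) : ℝ) : ℂ) • Z i + ((sin (a * π / k) : ℝ) : ℂ) • X i - σ i a) := by
  have hl : (k / 2 : ℂ) ≠ 0 := div_ne_zero (Nat.cast_ne_zero.mpr (by omega)) two_ne_zero
  have hcoef : ((2 / k : ℝ) : ℂ) = (k / 2 : ℂ)⁻¹ := by push_cast; rw [inv_div]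
  have hcc : ∑ a : Fin k, ((cos (a * π / k) : ℝ) : ℂ) ^ 2 = k / 2 := by
    simpa using congrArg ((↑) : ℝ → ℂ) (sum_cos_sq_mul_pi_div hk)
  have hss : ∑ a : Fin k, ((sin (a * π / k) : ℝ) : ℂ) ^ 2 = k / 2 := by
    simpa using congrArg ((↑) : ℝ → ℂ) (sum_sin_sq_mul_pi_div hk)
  have hcs : ∑ a : Fin k, ((cos (a * π / k) : ℝ) : ℂ) * ((sin (a * π / k) : ℝ) : ℂ) = 0 := by
    exact_mod_cast sum_cos_mul_sin_mul_pi_div hk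
  have hw : (fun a b : Fin k => ((2 / k * cos (π * (a - b) / k) : ℝ) : ℂ))
      = fun a b : Fin k => (k / 2 : ℂ)⁻¹ *
        (((cos (a * π / k) : ℝ) : ℂ) * ((cos (b * π / k) : ℝ) : ℂ)
          + ((sin (a * π / k) : ℝ) : ℂ) * ((sin (b * π / k) : ℝ) : ℂ)) := by
    ext a b
    rw [← hcoef, mul_sub, sub_div, cos_sub]
    push_cast
    ring_nf
  have := bellOperator_add_card_smul_one_eq hl hcc hss hcs hσ (fun i => hcoef ▸ hZ i)
    (fun i => hcoef ▸ hX i)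
  rwa [Fintype.card_fin, ← hw] at this

theorem max_violation_measurements_in_plane_general (N k : ℕ) (hk : 3 ≤ k)
    (H : Type*) [NormedAddCommGroup H] [InnerProductSpace ℂ H] [CompleteSpace H]
    (σ : Fin N → Fin k → (H →L[ℂ] H))
    (hsa : ∀ i a, IsSelfAdjoint (σ i a))
    (hsq : ∀ i a, σ i a * σ i a = 1)
    (Bop : H →L[ℂ] H)
    (hBop : Bop = ∑ a : Fin k, ∑ b : Fin k,
        (((2 / (k : ℝ)) * Real.cos (π * ((a : ℝ) - (b : ℝ)) / k) : ℝ) : ℂ) •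
          ∑ i : Fin N, ∑ j : Fin N, if i ≠ j then σ i a * σ j b else 0)
    (Z X : Fin N → (H →L[ℂ] H))
    (hZ : ∀ i, Z i = (((2 / (k : ℝ)) : ℝ) : ℂ) •
        ∑ a : Fin k, ((Real.cos ((a : ℝ) * π / k) : ℝ) : ℂ) • σ i a)
    (hX : ∀ i, X i = (((2 / (k : ℝ)) : ℝ) : ℂ) •
        ∑ a : Fin k, ((Real.sin ((a : ℝ) * π / k) : ℝ) : ℂ) • σ i a)
    (ψ : H) (hψ : ‖ψ‖ = 1)
    (hmax : (inner ℂ ψ (Bop ψ) : ℂ) = -(((N : ℝ) * k : ℝ) : ℂ)) :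
    ∀ (i : Fin N) (a : Fin k),
      (((Real.cos ((a : ℝ) * π / k) : ℝ) : ℂ) • Z i
        + ((Real.sin ((a : ℝ) * π / k) : ℝ) : ℂ) • X i) ψ = (σ i a) ψ := by
  have hSOS := bellOperator_two_div_mul_cos_add_card_smul_one_eq (by omega) hsq hZ hX
  have hB : Bop = bellOperator (fun a b : Fin k => ((2 / k * cos (π * (a - b) / k) : ℝ) : ℂ)) σ :=
    hBop
  have hreal : ∀ r : ℝ, IsSelfAdjoint (r : ℂ) := Complex.conj_ofReal
  have hsaZ : ∀ i, IsSelfAdjoint (Z i) := fun i => by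
    rw [hZ]
    exact (hreal _).smul (isSelfAdjoint_sum _ fun a _ => (hreal _).smul (hsa i a))
  have hsaX : ∀ i, IsSelfAdjoint (X i) := fun i => by
    rw [hX]
    exact (hreal _).smul (isSelfAdjoint_sum _ fun a _ => (hreal _).smul (hsa i a))
  have hP : ((k / 2 : ℂ) • ((∑ i, Z i) * (∑ i, Z i) + (∑ i, X i) * (∑ i, X i))).IsPositive :=
    ((isSelfAdjoint_sum _ fun i _ => hsaZ i).isPositive_mul_self.add
      (isSelfAdjoint_sum _ fun i _ => hsaX i).isPositive_mul_self).smul_of_nonneg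
        (by open scoped ComplexOrder in positivity)
  have hM : ∀ p : Fin N × Fin k, IsSelfAdjoint (((cos (p.2 * π / k) : ℝ) : ℂ) • Z p.1
      + ((sin (p.2 * π / k) : ℝ) : ℂ) • X p.1 - σ p.1 p.2) := fun p =>
    (((hreal _).smul (hsaZ p.1)).add ((hreal _).smul (hsaX p.1))).sub (hsa p.1 p.2)
  have hzero :=
    ContinuousLinearMap.apply_eq_zero_of_inner_add_sum_mul_self_eq_zero hP hM (x := ψ) ?_
  · intro i a
    simpa [sub_eq_zero] using hzero (i, a)
  simp only [Fintype.sum_prod_type]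
  rw [← hSOS, ← hB]
  simp [inner_add_right, hmax, ← Nat.cast_smul_eq_nsmul ℂ, inner_smul_right,
    inner_self_eq_norm_sq_to_K, hψ]

/-- If a unit vector `ψ` attains the quantum bound `⟨ψ, B̄ ψ⟩ = -Nk`, then for every
party `i` and setting `a`, `[Z̄⁽ⁱ⁾ cos(aπ/k) + X̄⁽ⁱ⁾ sin(aπ/k)] ψ = σ̄_a⁽ⁱ⁾ ψ`:
the measurements act on `ψ` as equally-spaced measurements in a plane. -/
theorem max_violation_measurements_in_plane (N k : ℕ) (hN : 2 ≤ N) (hk : 3 ≤ k)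
    (H : Type*) [NormedAddCommGroup H] [InnerProductSpace ℂ H] [CompleteSpace H]
    (σ : Fin N → Fin k → (H →L[ℂ] H))
    (hsa : ∀ i a, IsSelfAdjoint (σ i a))
    (hsq : ∀ i a, σ i a * σ i a = 1)
    (hcomm : ∀ i j a b, i ≠ j → Commute (σ i a) (σ j b))
    (Bop : H →L[ℂ] H)
    (hBop : Bop = ∑ a : Fin k, ∑ b : Fin k,
        (((2 / (k : ℝ)) * Real.cos (π * ((a : ℝ) - (b : ℝ)) / k) : ℝ) : ℂ) •
          ∑ i : Fin N, ∑ j : Fin N, if i ≠ j then σ i a * σ j b else 0)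
    (Z X : Fin N → (H →L[ℂ] H))
    (hZ : ∀ i, Z i = (((2 / (k : ℝ)) : ℝ) : ℂ) •
        ∑ a : Fin k, ((Real.cos ((a : ℝ) * π / k) : ℝ) : ℂ) • σ i a)
    (hX : ∀ i, X i = (((2 / (k : ℝ)) : ℝ) : ℂ) •
        ∑ a : Fin k, ((Real.sin ((a : ℝ) * π / k) : ℝ) : ℂ) • σ i a)
    (ψ : H) (hψ : ‖ψ‖ = 1)
    (hmax : (inner ℂ ψ (Bop ψ) : ℂ) = -(((N : ℝ) * k : ℝ) : ℂ)) :
    ∀ (i : Fin N) (a : Fin k),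
      (((Real.cos ((a : ℝ) * π / k) : ℝ) : ℂ) • Z i
        + ((Real.sin ((a : ℝ) * π / k) : ℝ) : ℂ) • X i) ψ = (σ i a) ψ :=
  max_violation_measurements_in_plane_general N k hk H σ hsa hsq Bop hBop Z X hZ hX ψ hψ hmax
end

section
/- For a system of N qubits measured along σ̂_a^{(i)} = Ẑ^{(i)} cos(aπ/k) + X̂^{(i)} sin(aπ/k), the Bell value satisfies B + Nk = 2k⟨Ĵ_z² + Ĵ_x²⟩, where Ĵ_z = (1/2)∑_i Ẑ^{(i)} and Ĵ_x = (1/2)∑_i X̂^{(i)}. In particular, any N-qubit state ρ with ⟨Ĵ_z²⟩ = ⟨Ĵ_x²⟩ = 0 achieves B = −Nk. -/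
open Real

section Aux

lemma bell_sum_exp_zero (k : ℕ) (hk : 2 ≤ k) :
    ∑ a : Fin k, Complex.exp (((2 * π * (a : ℝ) / k : ℝ) : ℂ) * Complex.I) = 0 := by
  have hk0 : (k : ℕ) ≠ 0 := by omega
  have hprim := Complex.isPrimitiveRoot_exp k hk0
  have hne1 : Complex.exp (2 * π * Complex.I / k) ≠ 1 := hprim.ne_one (by omega)
  have hpow : Complex.exp (2 * π * Complex.I / k) ^ k = 1 := hprim.pow_eq_one
  have key : ∀ a : ℕ, Complex.exp (((2 * π * (a : ℝ) / k : ℝ) : ℂ) * Complex.I)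
      = Complex.exp (2 * π * Complex.I / k) ^ a := by
    intro a
    rw [← Complex.exp_nat_mul]
    congr 1
    push_cast
    ring
  calc ∑ a : Fin k, Complex.exp (((2 * π * (a : ℝ) / k : ℝ) : ℂ) * Complex.I)
      = ∑ a : Fin k, Complex.exp (2 * π * Complex.I / k) ^ (a : ℕ) :=
        Finset.sum_congr rfl fun a _ => key a
    _ = ∑ a ∈ Finset.range k, Complex.exp (2 * π * Complex.I / k) ^ a :=
        Fin.sum_univ_eq_sum_range (fun a => Complex.exp (2 * π * Complex.I / k) ^ a) k
    _ = 0 := by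
        rw [geom_sum_eq hne1, hpow]; simp

lemma bell_sum_cos_zero (k : ℕ) (hk : 2 ≤ k) :
    ∑ a : Fin k, Real.cos (2 * π * (a : ℝ) / k) = 0 := by
  have h := bell_sum_exp_zero k hk
  have := congrArg Complex.re h
  rw [Complex.re_sum] at this
  simp only [Complex.exp_ofReal_mul_I_re] at this
  simpa using this

lemma bell_sum_sin_zero (k : ℕ) (hk : 2 ≤ k) :
    ∑ a : Fin k, Real.sin (2 * π * (a : ℝ) / k) = 0 := by
  have h := bell_sum_exp_zero k hk
  have := congrArg Complex.im h
  rw [Complex.im_sum] at this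
  simp only [Complex.exp_ofReal_mul_I_im] at this
  simpa using this

lemma bell_sum_cos_sq (k : ℕ) (hk : 2 ≤ k) :
    ∑ a : Fin k, Real.cos ((a : ℝ) * π / k) ^ 2 = k / 2 := by
  have h : ∀ a : Fin k, Real.cos ((a : ℝ) * π / k) ^ 2
      = 1 / 2 + Real.cos (2 * π * (a : ℝ) / k) / 2 := by
    intro a
    rw [Real.cos_sq]
    congr 2
    ring
  simp only [h]
  rw [Finset.sum_add_distrib]
  have h2 : ∑ a : Fin k, Real.cos (2 * π * (a : ℝ) / k) / 2
      = (∑ a : Fin k, Real.cos (2 * π * (a : ℝ) / k)) / 2 :=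
    (Finset.sum_div _ _ _).symm
  rw [h2, bell_sum_cos_zero k hk]
  simp
  ring

lemma bell_sum_sin_sq (k : ℕ) (hk : 2 ≤ k) :
    ∑ a : Fin k, Real.sin ((a : ℝ) * π / k) ^ 2 = k / 2 := by
  have h : ∀ a : Fin k, Real.sin ((a : ℝ) * π / k) ^ 2
      = 1 - Real.cos ((a : ℝ) * π / k) ^ 2 := by
    intro a; rw [Real.sin_sq]
  simp only [h]
  rw [Finset.sum_sub_distrib, bell_sum_cos_sq k hk]
  simp
  ring

lemma bell_sum_sin_cos (k : ℕ) (hk : 2 ≤ k) :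
    ∑ a : Fin k, Real.sin ((a : ℝ) * π / k) * Real.cos ((a : ℝ) * π / k) = 0 := by
  have h : ∀ a : Fin k, Real.sin ((a : ℝ) * π / k) * Real.cos ((a : ℝ) * π / k)
      = Real.sin (2 * π * (a : ℝ) / k) / 2 := by
    intro a
    have : 2 * π * (a : ℝ) / k = 2 * ((a : ℝ) * π / k) := by ring
    rw [this, Real.sin_two_mul]
    ring
  simp only [h]
  rw [← Finset.sum_div, bell_sum_sin_zero k hk]
  simp

/-- The linear functional `A ↦ tr (ρ A)`. -/
noncomputable def bellTrace (H : Type*) [NormedAddCommGroup H] [InnerProductSpace ℂ H]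
    [FiniteDimensional ℂ H] (ρ : H →L[ℂ] H) : (H →L[ℂ] H) →ₗ[ℂ] ℂ where
  toFun A := LinearMap.trace ℂ H ((ρ * A : H →L[ℂ] H) : H →ₗ[ℂ] H)
  map_add' A B := by simp [mul_add]
  map_smul' t A := by simp [mul_smul_comm]

lemma bell_sum4_comm {α β γ δ M : Type*} [Fintype α] [Fintype β] [Fintype γ] [Fintype δ]
    [AddCommMonoid M] (f : α → β → γ → δ → M) :
    ∑ a : α, ∑ b : β, ∑ i : γ, ∑ j : δ, f a b i j
      = ∑ i : γ, ∑ j : δ, ∑ a : α, ∑ b : β, f a b i j := by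
  calc ∑ a : α, ∑ b : β, ∑ i : γ, ∑ j : δ, f a b i j
      = ∑ a : α, ∑ i : γ, ∑ b : β, ∑ j : δ, f a b i j :=
        Finset.sum_congr rfl fun a _ => Finset.sum_comm
    _ = ∑ i : γ, ∑ a : α, ∑ b : β, ∑ j : δ, f a b i j := Finset.sum_comm
    _ = ∑ i : γ, ∑ a : α, ∑ j : δ, ∑ b : β, f a b i j :=
        Finset.sum_congr rfl fun i _ => Finset.sum_congr rfl fun a _ => Finset.sum_comm
    _ = ∑ i : γ, ∑ j : δ, ∑ a : α, ∑ b : β, f a b i j :=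
        Finset.sum_congr rfl fun i _ => Finset.sum_comm

lemma bell_sum2_smul {ι κ M : Type*} [Fintype ι] [Fintype κ] [AddCommMonoid M] [Module ℂ M]
    (f : ι → κ → ℝ) (A : M) :
    (∑ a : ι, ∑ b : κ, ((f a b : ℝ) : ℂ) • A) = (((∑ a : ι, ∑ b : κ, f a b : ℝ)) : ℂ) • A := by
  have : ((((∑ a : ι, ∑ b : κ, f a b : ℝ)) : ℂ)) = ∑ a : ι, ∑ b : κ, ((f a b : ℝ) : ℂ) := by
    push_cast; rfl
  rw [this, Finset.sum_smul]
  exact Finset.sum_congr rfl fun a _ => (Finset.sum_smul).symm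

lemma bell_offdiag {N : ℕ} {H : Type*} [NormedAddCommGroup H] [InnerProductSpace ℂ H]
    [FiniteDimensional ℂ H] (W : Fin N → (H →L[ℂ] H)) (J : H →L[ℂ] H)
    (hsq : ∀ i, W i * W i = 1) (hJ : J = (1 / 2 : ℂ) • ∑ i : Fin N, W i) :
    ∑ i : Fin N, ∑ j : Fin N, (if i ≠ j then W i * W j else 0)
      = (4 : ℂ) • (J * J) - ((N : ℝ) : ℂ) • 1 := by
  have h44 : (4 : ℂ) • (J * J) = (∑ i : Fin N, W i) * (∑ j : Fin N, W j) := by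
    rw [hJ, smul_mul_smul_comm, smul_smul]
    norm_num
  have hSS : (∑ i : Fin N, W i) * (∑ j : Fin N, W j)
      = ∑ i : Fin N, ∑ j : Fin N, W i * W j := Fintype.sum_mul_sum _ _
  have hdiag : ∑ i : Fin N, ∑ j : Fin N, (if i = j then W i * W j else 0)
      = ((N : ℝ) : ℂ) • (1 : H →L[ℂ] H) := by
    have h1 : ∀ i : Fin N, ∑ j : Fin N, (if i = j then W i * W j else 0) = 1 := by
      intro i
      rw [Finset.sum_ite_eq]
      simp [hsq i]
    simp only [h1]
    rw [Finset.sum_const, Finset.card_univ, Fintype.card_fin,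
      show (((N : ℝ)) : ℂ) = ((N : ℕ) : ℂ) by push_cast; rfl,
      Nat.cast_smul_eq_nsmul]
  have hsplit : ∑ i : Fin N, ∑ j : Fin N, (if i ≠ j then W i * W j else 0)
      + ∑ i : Fin N, ∑ j : Fin N, (if i = j then W i * W j else 0)
      = ∑ i : Fin N, ∑ j : Fin N, W i * W j := by
    rw [← Finset.sum_add_distrib]
    refine Finset.sum_congr rfl fun i _ => ?_
    rw [← Finset.sum_add_distrib]
    refine Finset.sum_congr rfl fun j _ => ?_
    by_cases h : i = j <;> simp [h]
  rw [h44, hSS, ← hsplit, hdiag]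
  abel

end Aux

/-- For `N` qubits measured along `σ̂_a⁽ⁱ⁾ = Ẑ⁽ⁱ⁾ cos(aπ/k) + X̂⁽ⁱ⁾ sin(aπ/k)`, the Bell
value of a density operator `ρ` satisfies `B + Nk = 2k ⟨Ĵ_z² + Ĵ_x²⟩`, where
`Ĵ_z = (1/2) ∑_i Ẑ⁽ⁱ⁾` and `Ĵ_x = (1/2) ∑_i X̂⁽ⁱ⁾`. In particular, any state with
`⟨Ĵ_z²⟩ = ⟨Ĵ_x²⟩ = 0` achieves `B = -Nk`. -/
theorem qubit_realization_bell_value (N k : ℕ) (hN : 2 ≤ N) (hk : 3 ≤ k)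
    (H : Type*) [NormedAddCommGroup H] [InnerProductSpace ℂ H] [FiniteDimensional ℂ H]
    (Z X : Fin N → (H →L[ℂ] H))
    (hZsa : ∀ i, IsSelfAdjoint (Z i)) (hXsa : ∀ i, IsSelfAdjoint (X i))
    (hZsq : ∀ i, Z i * Z i = 1) (hXsq : ∀ i, X i * X i = 1)
    (hanti : ∀ i, Z i * X i + X i * Z i = 0)
    (hcommZZ : ∀ i j, i ≠ j → Commute (Z i) (Z j))
    (hcommXX : ∀ i j, i ≠ j → Commute (X i) (X j))
    (hcommZX : ∀ i j, i ≠ j → Commute (Z i) (X j))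
    (σ : Fin N → Fin k → (H →L[ℂ] H))
    (hσ : ∀ i a, σ i a = ((Real.cos ((a : ℝ) * π / k) : ℝ) : ℂ) • Z i
        + ((Real.sin ((a : ℝ) * π / k) : ℝ) : ℂ) • X i)
    (Jz Jx : H →L[ℂ] H)
    (hJz : Jz = (1 / 2 : ℂ) • ∑ i : Fin N, Z i)
    (hJx : Jx = (1 / 2 : ℂ) • ∑ i : Fin N, X i)
    (ρ : H →L[ℂ] H) (hρpos : ρ.IsPositive)
    (hρtr : LinearMap.trace ℂ H (ρ : H →ₗ[ℂ] H) = 1)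
    (B : ℂ)
    (hB : B = (2 / (k : ℝ) : ℂ) * ∑ a : Fin k, ∑ b : Fin k, ∑ i : Fin N, ∑ j : Fin N,
      if i ≠ j then
        LinearMap.trace ℂ H ((ρ * (σ i a * σ j b) : H →L[ℂ] H) : H →ₗ[ℂ] H)
          * ((Real.cos (π * ((a : ℝ) - (b : ℝ)) / k) : ℝ) : ℂ)
      else 0) :
    B + ((N : ℝ) * k : ℝ) = 2 * (k : ℂ) *
        LinearMap.trace ℂ H ((ρ * (Jz * Jz + Jx * Jx) : H →L[ℂ] H) : H →ₗ[ℂ] H) ∧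
    (LinearMap.trace ℂ H ((ρ * (Jz * Jz) : H →L[ℂ] H) : H →ₗ[ℂ] H) = 0 →
     LinearMap.trace ℂ H ((ρ * (Jx * Jx) : H →L[ℂ] H) : H →ₗ[ℂ] H) = 0 →
     B = -(((N : ℝ) * k : ℝ) : ℂ)) := by
  have hk2 : 2 ≤ k := by omega
  have hkR : (k : ℝ) ≠ 0 := by positivity
  have hkC : (k : ℂ) ≠ 0 := by exact_mod_cast (Nat.cast_ne_zero (R := ℂ)).mpr (by omega)
  set φ := bellTrace H ρ with hφdef
  -- trig double sums
  have e1 : ∑ a : Fin k, ∑ b : Fin k,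
      (Real.cos ((a : ℝ) * π / k) * Real.cos ((b : ℝ) * π / k)
        + Real.sin ((a : ℝ) * π / k) * Real.sin ((b : ℝ) * π / k))
      * (Real.cos ((a : ℝ) * π / k) * Real.cos ((b : ℝ) * π / k)) = (k : ℝ) ^ 2 / 4 := by
    have : ∀ a b : Fin k,
        (Real.cos ((a : ℝ) * π / k) * Real.cos ((b : ℝ) * π / k)
          + Real.sin ((a : ℝ) * π / k) * Real.sin ((b : ℝ) * π / k))
        * (Real.cos ((a : ℝ) * π / k) * Real.cos ((b : ℝ) * π / k))
        = Real.cos ((a : ℝ) * π / k) ^ 2 * Real.cos ((b : ℝ) * π / k) ^ 2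
          + (Real.sin ((a : ℝ) * π / k) * Real.cos ((a : ℝ) * π / k))
            * (Real.sin ((b : ℝ) * π / k) * Real.cos ((b : ℝ) * π / k)) := by
      intro a b; ring
    simp only [this, Finset.sum_add_distrib]
    rw [← Fintype.sum_mul_sum, ← Fintype.sum_mul_sum, bell_sum_cos_sq k hk2,
      bell_sum_sin_cos k hk2]
    ring
  have e2 : ∑ a : Fin k, ∑ b : Fin k,
      (Real.cos ((a : ℝ) * π / k) * Real.cos ((b : ℝ) * π / k)
        + Real.sin ((a : ℝ) * π / k) * Real.sin ((b : ℝ) * π / k))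
      * (Real.cos ((a : ℝ) * π / k) * Real.sin ((b : ℝ) * π / k)) = 0 := by
    have : ∀ a b : Fin k,
        (Real.cos ((a : ℝ) * π / k) * Real.cos ((b : ℝ) * π / k)
          + Real.sin ((a : ℝ) * π / k) * Real.sin ((b : ℝ) * π / k))
        * (Real.cos ((a : ℝ) * π / k) * Real.sin ((b : ℝ) * π / k))
        = Real.cos ((a : ℝ) * π / k) ^ 2
            * (Real.sin ((b : ℝ) * π / k) * Real.cos ((b : ℝ) * π / k))
          + (Real.sin ((a : ℝ) * π / k) * Real.cos ((a : ℝ) * π / k))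
            * Real.sin ((b : ℝ) * π / k) ^ 2 := by
      intro a b; ring
    simp only [this, Finset.sum_add_distrib]
    rw [← Fintype.sum_mul_sum, ← Fintype.sum_mul_sum, bell_sum_sin_cos k hk2]
    ring
  have e3 : ∑ a : Fin k, ∑ b : Fin k,
      (Real.cos ((a : ℝ) * π / k) * Real.cos ((b : ℝ) * π / k)
        + Real.sin ((a : ℝ) * π / k) * Real.sin ((b : ℝ) * π / k))
      * (Real.sin ((a : ℝ) * π / k) * Real.cos ((b : ℝ) * π / k)) = 0 := by
    have : ∀ a b : Fin k,
        (Real.cos ((a : ℝ) * π / k) * Real.cos ((b : ℝ) * π / k)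
          + Real.sin ((a : ℝ) * π / k) * Real.sin ((b : ℝ) * π / k))
        * (Real.sin ((a : ℝ) * π / k) * Real.cos ((b : ℝ) * π / k))
        = (Real.sin ((a : ℝ) * π / k) * Real.cos ((a : ℝ) * π / k))
            * Real.cos ((b : ℝ) * π / k) ^ 2
          + Real.sin ((a : ℝ) * π / k) ^ 2
            * (Real.sin ((b : ℝ) * π / k) * Real.cos ((b : ℝ) * π / k)) := by
      intro a b; ring
    simp only [this, Finset.sum_add_distrib]
    rw [← Fintype.sum_mul_sum, ← Fintype.sum_mul_sum, bell_sum_sin_cos k hk2]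
    ring
  have e4 : ∑ a : Fin k, ∑ b : Fin k,
      (Real.cos ((a : ℝ) * π / k) * Real.cos ((b : ℝ) * π / k)
        + Real.sin ((a : ℝ) * π / k) * Real.sin ((b : ℝ) * π / k))
      * (Real.sin ((a : ℝ) * π / k) * Real.sin ((b : ℝ) * π / k)) = (k : ℝ) ^ 2 / 4 := by
    have : ∀ a b : Fin k,
        (Real.cos ((a : ℝ) * π / k) * Real.cos ((b : ℝ) * π / k)
          + Real.sin ((a : ℝ) * π / k) * Real.sin ((b : ℝ) * π / k))
        * (Real.sin ((a : ℝ) * π / k) * Real.sin ((b : ℝ) * π / k))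
        = (Real.sin ((a : ℝ) * π / k) * Real.cos ((a : ℝ) * π / k))
            * (Real.sin ((b : ℝ) * π / k) * Real.cos ((b : ℝ) * π / k))
          + Real.sin ((a : ℝ) * π / k) ^ 2 * Real.sin ((b : ℝ) * π / k) ^ 2 := by
      intro a b; ring
    simp only [this, Finset.sum_add_distrib]
    rw [← Fintype.sum_mul_sum, ← Fintype.sum_mul_sum, bell_sum_sin_sq k hk2,
      bell_sum_sin_cos k hk2]
    ring
  -- the key per-pair (i,j) sum over measurement settings
  have key : ∀ i j : Fin N,
      (∑ a : Fin k, ∑ b : Fin k,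
        ((Real.cos (π * ((a : ℝ) - (b : ℝ)) / k) : ℝ) : ℂ) • (σ i a * σ j b))
      = ((((k : ℝ) ^ 2 / 4 : ℝ)) : ℂ) • (Z i * Z j + X i * X j) := by
    intro i j
    have step1 : ∀ a b : Fin k,
        ((Real.cos (π * ((a : ℝ) - (b : ℝ)) / k) : ℝ) : ℂ) • (σ i a * σ j b)
        = (((Real.cos ((a : ℝ) * π / k) * Real.cos ((b : ℝ) * π / k)
              + Real.sin ((a : ℝ) * π / k) * Real.sin ((b : ℝ) * π / k))
            * (Real.cos ((a : ℝ) * π / k) * Real.cos ((b : ℝ) * π / k)) : ℝ) : ℂ) • (Z i * Z j)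
        + (((Real.cos ((a : ℝ) * π / k) * Real.cos ((b : ℝ) * π / k)
              + Real.sin ((a : ℝ) * π / k) * Real.sin ((b : ℝ) * π / k))
            * (Real.cos ((a : ℝ) * π / k) * Real.sin ((b : ℝ) * π / k)) : ℝ) : ℂ) • (Z i * X j)
        + (((Real.cos ((a : ℝ) * π / k) * Real.cos ((b : ℝ) * π / k)
              + Real.sin ((a : ℝ) * π / k) * Real.sin ((b : ℝ) * π / k))
            * (Real.sin ((a : ℝ) * π / k) * Real.cos ((b : ℝ) * π / k)) : ℝ) : ℂ) • (X i * Z j)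
        + (((Real.cos ((a : ℝ) * π / k) * Real.cos ((b : ℝ) * π / k)
              + Real.sin ((a : ℝ) * π / k) * Real.sin ((b : ℝ) * π / k))
            * (Real.sin ((a : ℝ) * π / k) * Real.sin ((b : ℝ) * π / k)) : ℝ) : ℂ) • (X i * X j) := by
      intro a b
      have h1 : π * ((a : ℝ) - (b : ℝ)) / k = (a : ℝ) * π / k - (b : ℝ) * π / k := by ring
      rw [hσ i a, hσ j b, h1, Real.cos_sub]
      simp only [add_mul, mul_add, smul_add, add_smul, smul_mul_assoc, mul_smul_comm, smul_smul]
      match_scalars <;> (push_cast; ring)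
    calc (∑ a : Fin k, ∑ b : Fin k,
          ((Real.cos (π * ((a : ℝ) - (b : ℝ)) / k) : ℝ) : ℂ) • (σ i a * σ j b))
        = ∑ a : Fin k, ∑ b : Fin k,
          ((((Real.cos ((a : ℝ) * π / k) * Real.cos ((b : ℝ) * π / k)
              + Real.sin ((a : ℝ) * π / k) * Real.sin ((b : ℝ) * π / k))
            * (Real.cos ((a : ℝ) * π / k) * Real.cos ((b : ℝ) * π / k)) : ℝ) : ℂ) • (Z i * Z j)
        + (((Real.cos ((a : ℝ) * π / k) * Real.cos ((b : ℝ) * π / k)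
              + Real.sin ((a : ℝ) * π / k) * Real.sin ((b : ℝ) * π / k))
            * (Real.cos ((a : ℝ) * π / k) * Real.sin ((b : ℝ) * π / k)) : ℝ) : ℂ) • (Z i * X j)
        + (((Real.cos ((a : ℝ) * π / k) * Real.cos ((b : ℝ) * π / k)
              + Real.sin ((a : ℝ) * π / k) * Real.sin ((b : ℝ) * π / k))
            * (Real.sin ((a : ℝ) * π / k) * Real.cos ((b : ℝ) * π / k)) : ℝ) : ℂ) • (X i * Z j)
        + (((Real.cos ((a : ℝ) * π / k) * Real.cos ((b : ℝ) * π / k)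
              + Real.sin ((a : ℝ) * π / k) * Real.sin ((b : ℝ) * π / k))
            * (Real.sin ((a : ℝ) * π / k) * Real.sin ((b : ℝ) * π / k)) : ℝ) : ℂ) • (X i * X j)) :=
          Finset.sum_congr rfl fun a _ => Finset.sum_congr rfl fun b _ => step1 a b
      _ = ((((k : ℝ) ^ 2 / 4 : ℝ)) : ℂ) • (Z i * Z j + X i * X j) := by
          simp only [Finset.sum_add_distrib]
          rw [bell_sum2_smul, bell_sum2_smul, bell_sum2_smul, bell_sum2_smul,
            e1, e2, e3, e4]
          push_cast
          module
  -- express B via the trace functional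
  have hB2 : B = (2 / (k : ℝ) : ℂ) * φ (∑ a : Fin k, ∑ b : Fin k, ∑ i : Fin N, ∑ j : Fin N,
      if i ≠ j then
        ((Real.cos (π * ((a : ℝ) - (b : ℝ)) / k) : ℝ) : ℂ) • (σ i a * σ j b)
      else 0) := by
    rw [hB]
    congr 1
    rw [map_sum]
    refine Finset.sum_congr rfl fun a _ => ?_
    rw [map_sum]
    refine Finset.sum_congr rfl fun b _ => ?_
    rw [map_sum]
    refine Finset.sum_congr rfl fun i _ => ?_
    rw [map_sum]
    refine Finset.sum_congr rfl fun j _ => ?_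
    by_cases h : i ≠ j
    · rw [if_pos h, if_pos h, map_smul, smul_eq_mul, mul_comm]
      rfl
    · rw [if_neg h, if_neg h, map_zero]
  -- reorganize the operator sum
  have hM : (∑ a : Fin k, ∑ b : Fin k, ∑ i : Fin N, ∑ j : Fin N,
      if i ≠ j then
        ((Real.cos (π * ((a : ℝ) - (b : ℝ)) / k) : ℝ) : ℂ) • (σ i a * σ j b)
      else 0)
      = ((((k : ℝ) ^ 2 / 4 : ℝ)) : ℂ) • ∑ i : Fin N, ∑ j : Fin N,
          (if i ≠ j then Z i * Z j + X i * X j else 0) := by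
    rw [bell_sum4_comm]
    rw [Finset.smul_sum]
    refine Finset.sum_congr rfl fun i _ => ?_
    rw [Finset.smul_sum]
    refine Finset.sum_congr rfl fun j _ => ?_
    by_cases h : i ≠ j
    · simp only [if_pos h]
      rw [← key i j]
    · simp only [if_neg h, smul_zero]
      simp
  have hDz := bell_offdiag Z Jz hZsq hJz
  have hDx := bell_offdiag X Jx hXsq hJx
  have hD : (∑ i : Fin N, ∑ j : Fin N, (if i ≠ j then Z i * Z j + X i * X j else 0))
      = (4 : ℂ) • (Jz * Jz + Jx * Jx) - ((2 * (N : ℝ) : ℝ) : ℂ) • 1 := by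
    have hsplit : (∑ i : Fin N, ∑ j : Fin N, (if i ≠ j then Z i * Z j + X i * X j else 0))
        = (∑ i : Fin N, ∑ j : Fin N, (if i ≠ j then Z i * Z j else 0))
          + (∑ i : Fin N, ∑ j : Fin N, (if i ≠ j then X i * X j else 0)) := by
      rw [← Finset.sum_add_distrib]
      refine Finset.sum_congr rfl fun i _ => ?_
      rw [← Finset.sum_add_distrib]
      refine Finset.sum_congr rfl fun j _ => ?_
      by_cases h : i ≠ j <;> simp [h]
    rw [hsplit, hDz, hDx]
    push_cast
    module
  -- trace of identity
  have hφ1 : φ (1 : H →L[ℂ] H) = 1 := by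
    rw [hφdef]
    simp only [bellTrace, LinearMap.coe_mk, AddHom.coe_mk, mul_one]
    exact hρtr
  have hφJ : φ (Jz * Jz + Jx * Jx)
      = LinearMap.trace ℂ H ((ρ * (Jz * Jz + Jx * Jx) : H →L[ℂ] H) : H →ₗ[ℂ] H) := rfl
  have hBval : B = 2 * (k : ℂ) * φ (Jz * Jz + Jx * Jx) - (N : ℂ) * (k : ℂ) := by
    rw [hB2, hM, hD, map_smul, map_sub, map_smul, map_smul, hφ1]
    push_cast
    field_simp
    ring
  constructor
  · rw [hBval, hφJ]
    push_cast
    ring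
  · intro hz hx
    have hφadd : φ (Jz * Jz + Jx * Jx) = φ (Jz * Jz) + φ (Jx * Jx) := map_add φ _ _
    have hz' : φ (Jz * Jz) = 0 := hz
    have hx' : φ (Jx * Jx) = 0 := hx
    rw [hBval, hφadd, hz', hx']
    push_cast
    ring
end
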